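/- If n is a natural number such that the polynomial B_{n+1}(t) - B_n(t) is a constant polynomial (i.e. has degree 0 or is zero), then there exists a natural number m ≥ 1 with n = 2^m - 2, and in that case B_{n+1}(t) - B_n(t) = 1. -/
import Mathlib


open Polynomial

/-- The Stern polynomials: `B 0 = 0`, `B 1 = 1`, `B (2n) = t * B n`,
`B (2n+1) = B n + B (n+1)`. -/
noncomputable def stern : ℕ → Polynomial ℤ
  | 0 => 0
  | 1 => 1
  | n + 2 =>
    if _h : n % 2 = 0 then
      X * stern (n / 2 + 1)
    else
      stern (n / 2 + 1) + stern (n / 2 + 2)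
  decreasing_by all_goals omega

lemma stern_two_mul (m : ℕ) : stern (2 * m + 2) = X * stern (m + 1) := by
  rw [stern]
  rw [dif_pos (by omega : (2 * m) % 2 = 0)]
  congr 2
  omega

lemma stern_odd (m : ℕ) : stern (2 * m + 1) = stern m + stern (m + 1) := by
  cases m with
  | zero => simp [stern]
  | succ j =>
    rw [show 2 * (j + 1) + 1 = (2 * j + 1) + 2 by ring, stern]
    rw [dif_neg (by omega : ¬ (2 * j + 1) % 2 = 0)]
    congr 2 <;> omega

lemma stern_eval_two (n : ℕ) : (stern n).eval 2 = (n : ℤ) := by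
  induction n using Nat.strong_induction_on with
  | _ n ih =>
    match n, ih with
    | 0, _ => simp [stern]
    | 1, _ => simp [stern]
    | (m + 2), ih =>
      rcases Nat.even_or_odd m with ⟨j, hj⟩ | ⟨j, hj⟩
      · rw [show m + 2 = 2 * j + 2 by omega, stern_two_mul]
        have := ih (j + 1) (by omega)
        simp [this]
        omega
      · rw [show m + 2 = 2 * (j + 1) + 1 by omega, stern_odd]
        have h1 := ih (j + 1) (by omega)
        have h2 := ih (j + 2) (by omega)
        simp [h1, h2]
        omega

lemma stern_eval_one_pos (n : ℕ) (hn : 1 ≤ n) : 1 ≤ (stern n).eval 1 := by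
  induction n using Nat.strong_induction_on with
  | _ n ih =>
    match n, hn, ih with
    | 1, _, _ => simp [stern]
    | (m + 2), _, ih =>
      rcases Nat.even_or_odd m with ⟨j, hj⟩ | ⟨j, hj⟩
      · rw [show m + 2 = 2 * j + 2 by omega, stern_two_mul]
        have := ih (j + 1) (by omega) (by omega)
        simpa using this
      · rw [show m + 2 = 2 * (j + 1) + 1 by omega, stern_odd]
        have h1 := ih (j + 1) (by omega) (by omega)
        have h2 := ih (j + 2) (by omega) (by omega)
        simp only [eval_add]
        linarith

lemma stern_key (k : ℕ) (hk : stern (k + 1) = (X - 1) * stern k + 1) :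
    ∃ a : ℕ, k + 1 = 2 ^ a := by
  induction k using Nat.strong_induction_on with
  | _ k ih =>
    rcases Nat.even_or_odd k with ⟨j, hj⟩ | ⟨j, hj⟩
    · rcases Nat.eq_zero_or_pos j with rfl | hjpos
      · exact ⟨0, by omega⟩
      · exfalso
        rw [show k + 1 = 2 * j + 1 by omega, stern_odd,
          show k = 2 * (j - 1) + 2 by omega,
          stern_two_mul, show j - 1 + 1 = j by omega] at hk
        have h1 := congrArg (eval 1) hk
        simp only [eval_add, eval_mul, eval_sub, eval_X, eval_one] at h1
        have p1 := stern_eval_one_pos j (by omega)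
        have p2 := stern_eval_one_pos (j + 1) (by omega)
        linarith
    · rw [show k + 1 = 2 * j + 2 by omega, stern_two_mul,
        show k = 2 * j + 1 by omega, stern_odd] at hk
      have key : stern (j + 1) = (X - 1) * stern j + 1 := by linear_combination hk
      obtain ⟨a, ha⟩ := ih j (by omega) key
      exact ⟨a + 1, by rw [pow_succ]; omega⟩

theorem stern_diff_constant (n : ℕ) (c : ℤ)
    (h : stern (n + 1) - stern n = Polynomial.C c) :
    (∃ m : ℕ, 1 ≤ m ∧ n = 2 ^ m - 2) ∧ stern (n + 1) - stern n = 1 := by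
  have hc : c = 1 := by
    have h2 := congrArg (eval 2) h
    simp only [eval_sub, eval_C, stern_eval_two] at h2
    push_cast at h2
    omega
  subst hc
  rcases Nat.even_or_odd n with ⟨k, hk⟩ | ⟨j, hj⟩
  · -- n = 2k
    have key : stern (k + 1) = (X - 1) * stern k + 1 := by
      rcases Nat.eq_zero_or_pos k with rfl | hkpos
      · simp [stern]
      · rw [show n + 1 = 2 * k + 1 by omega, stern_odd,
          show n = 2 * (k - 1) + 2 by omega, stern_two_mul,
          show k - 1 + 1 = k by omega] at h
        rw [map_one] at h
        linear_combination h
    obtain ⟨a, ha⟩ := stern_key k key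
    refine ⟨⟨a + 1, by omega, by rw [pow_succ]; omega⟩, by rw [h, map_one]⟩
  · -- n = 2j + 1
    exfalso
    rw [show n + 1 = 2 * j + 2 by omega, show n = 2 * j + 1 by omega,
      stern_two_mul, stern_odd] at h
    have h1 := congrArg (eval 1) h
    simp only [eval_sub, eval_add, eval_mul, eval_X, eval_C] at h1
    rcases Nat.eq_zero_or_pos j with rfl | hjpos
    · simp [stern] at h1
    · have := stern_eval_one_pos j hjpos
      linarith
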